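/- Consider the RSSD iteration on the unit sphere S^{n−1} (n ≥ 1) applied to a smoothing function f̃ of f : ℝⁿ → ℝ, and let K = {ℓ : ‖η_ℓ‖ ≤ δ_ℓ}. Suppose in addition that f̃ satisfies Riemannian gradient sub-consistency on the sphere: for every x ∈ S^{n−1}, every v ∈ ℝⁿ which is a limit of Proj_{z_k}(∇_x f̃(z_k, μ_k)) along some sequences z_k ∈ S^{n−1} with z_k → x and μ_k → 0⁺ belongs to the Riemannian limiting subdifferential ∂_R f(x). Then any accumulation point x* of the subsequence (x_ℓ)_{ℓ ∈ K} is a Riemannian limiting stationary point of the problem min_{x ∈ S^{n−1}} f(x), i.e., 0 ∈ ∂_R f(x*). -/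

import Mathlib

open Filter Topology

/-- The orthogonal projection onto the tangent space of the unit sphere at `x`:
`Proj_x(v) = v − ⟨v, x⟩x`. -/
noncomputable def sphereProj {n : ℕ} (x v : EuclideanSpace ℝ (Fin n)) :
    EuclideanSpace ℝ (Fin n) :=
  v - (inner ℝ v x : ℝ) • x

/-- The RSSD search direction `η = −Proj_x(∇_x f̃(x, μ))` at the point `x` with
smoothing parameter `μ`. -/
noncomputable def rssdDir {n : ℕ} (ft : EuclideanSpace ℝ (Fin n) → ℝ → ℝ)
    (x : EuclideanSpace ℝ (Fin n)) (μ : ℝ) : EuclideanSpace ℝ (Fin n) :=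
  -sphereProj x (gradient (fun y => ft y μ) x)

/-- The Armijo condition at `x ∈ S^{n−1}` with parameter `μ`, stepsize `t`, slope
parameter `σ` and direction `η`, along the retraction `R_x(ξ) = (x+ξ)/‖x+ξ‖`:
`f̃((x + tη)/‖x + tη‖, μ) ≤ f̃(x, μ) − σ t ‖η‖²`. -/
def ArmijoCond {n : ℕ} (ft : EuclideanSpace ℝ (Fin n) → ℝ → ℝ)
    (x : EuclideanSpace ℝ (Fin n)) (μ σ t : ℝ) (η : EuclideanSpace ℝ (Fin n)) : Prop :=
  ft ((‖x + t • η‖)⁻¹ • (x + t • η)) μ ≤ ft x μ - σ * t * ‖η‖ ^ 2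

/-- The RSSD iteration on the unit sphere `S^{n−1}`: parameters
`θ_μ, θ_δ, β, σ ∈ (0,1)`, `ᾱ > 0`; initial data `x 0 ∈ S^{n−1}`, `μ 0 > 0`, `δ 0 > 0`;
`η_ℓ = −Proj_{x_ℓ}(∇_x f̃(x_ℓ, μ_ℓ))`; if `‖η_ℓ‖ ≤ δ_ℓ` then `μ_{ℓ+1} = θ_μ μ_ℓ`,
`δ_{ℓ+1} = θ_δ δ_ℓ`, `x_{ℓ+1} = x_ℓ`; otherwise `μ_{ℓ+1} = μ_ℓ`, `δ_{ℓ+1} = δ_ℓ`, and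
`x_{ℓ+1} = R_{x_ℓ}(β^{m_ℓ} ᾱ η_ℓ)` where `m_ℓ` is the smallest nonnegative integer
satisfying the Armijo condition. -/
structure IsRSSDIteration {n : ℕ} (ft : EuclideanSpace ℝ (Fin n) → ℝ → ℝ)
    (θμ θδ β σ abar : ℝ) (x : ℕ → EuclideanSpace ℝ (Fin n)) (μ δ : ℕ → ℝ) : Prop where
  smooth : ∀ m > (0 : ℝ), ContDiff ℝ 1 (fun y => ft y m)
  hθμ : 0 < θμ ∧ θμ < 1
  hθδ : 0 < θδ ∧ θδ < 1
  hβ : 0 < β ∧ β < 1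
  hσ : 0 < σ ∧ σ < 1
  habar : 0 < abar
  hμ0 : 0 < μ 0
  hδ0 : 0 < δ 0
  sphere : ∀ ℓ, ‖x ℓ‖ = 1
  step_small : ∀ ℓ, ‖rssdDir ft (x ℓ) (μ ℓ)‖ ≤ δ ℓ →
    μ (ℓ + 1) = θμ * μ ℓ ∧ δ (ℓ + 1) = θδ * δ ℓ ∧ x (ℓ + 1) = x ℓ
  step_big : ∀ ℓ, ¬ ‖rssdDir ft (x ℓ) (μ ℓ)‖ ≤ δ ℓ →
    μ (ℓ + 1) = μ ℓ ∧ δ (ℓ + 1) = δ ℓ ∧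
    ∃ m : ℕ,
      ArmijoCond ft (x ℓ) (μ ℓ) σ (β ^ m * abar) (rssdDir ft (x ℓ) (μ ℓ)) ∧
      (∀ j : ℕ, j < m →
        ¬ ArmijoCond ft (x ℓ) (μ ℓ) σ (β ^ j * abar) (rssdDir ft (x ℓ) (μ ℓ))) ∧
      x (ℓ + 1) = (‖x ℓ + (β ^ m * abar) • rssdDir ft (x ℓ) (μ ℓ)‖)⁻¹ •
        (x ℓ + (β ^ m * abar) • rssdDir ft (x ℓ) (μ ℓ))

/-- `ft` is a smoothing function of `f : ℝⁿ → ℝ` with constant `κ > 0` and function `ω`. -/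
def IsSmoothingFun {n : ℕ} (f : EuclideanSpace ℝ (Fin n) → ℝ)
    (ft : EuclideanSpace ℝ (Fin n) → ℝ → ℝ) (κ : ℝ) (ω : ℝ → ℝ) : Prop :=
  0 < κ ∧ (∀ μ > (0 : ℝ), ContDiff ℝ 1 (fun x => ft x μ)) ∧
    (∀ μ > (0 : ℝ), 0 < ω μ) ∧ Filter.Tendsto ω (nhdsWithin 0 (Set.Ioi 0)) (nhds 0) ∧
    ∀ x, ∀ μ > (0 : ℝ), |ft x μ - f x| ≤ κ * ω μ

/-- `v` is a Riemannian Fréchet subgradient of `f` at `x ∈ S^{n−1}`: there exist `δ > 0`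
and `h` continuously differentiable on the open ball of radius `δ` centered at `x` such
that `f − h` attains a local minimum at `x` relative to the sphere and
`v = Proj_x(∇h(x))`. -/
def IsRFrechetSubgradient {n : ℕ} (f : EuclideanSpace ℝ (Fin n) → ℝ)
    (x v : EuclideanSpace ℝ (Fin n)) : Prop :=
  ∃ δ > (0 : ℝ), ∃ h : EuclideanSpace ℝ (Fin n) → ℝ,
    ContDiffOn ℝ 1 h (Metric.ball x δ) ∧
    (∃ ε > (0 : ℝ), ∀ y, ‖y‖ = 1 → ‖y - x‖ < ε → f x - h x ≤ f y - h y) ∧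
    v = sphereProj x (gradient h x)

/-- `v ∈ ∂_R f(x)`: `v` is a Riemannian limiting subgradient of `f` at `x ∈ S^{n−1}`. -/
def IsRLimitingSubgradient {n : ℕ} (f : EuclideanSpace ℝ (Fin n) → ℝ)
    (x v : EuclideanSpace ℝ (Fin n)) : Prop :=
  ∃ (xk vk : ℕ → EuclideanSpace ℝ (Fin n)),
    (∀ k, ‖xk k‖ = 1) ∧
    Filter.Tendsto xk Filter.atTop (nhds x) ∧
    Filter.Tendsto (fun k => f (xk k)) Filter.atTop (nhds (f x)) ∧
    (∀ k, IsRFrechetSubgradient f (xk k) (vk k)) ∧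
    Filter.Tendsto vk Filter.atTop (nhds v)

/-!
Along the iterations `ℓ` with `‖η_ℓ‖ ≤ δ_ℓ` both the smoothing parameter and the tolerance are
multiplied by a factor in `(0,1)`, and they never increase otherwise, so `μ_ℓ → 0` and `δ_ℓ → 0`
along any subsequence of such iterations. There `‖Proj_{x_ℓ}(∇_x f̃(x_ℓ, μ_ℓ))‖ = ‖η_ℓ‖ ≤ δ_ℓ`,
so the projected smoothed gradients tend to `0` and gradient sub-consistency gives `0 ∈ ∂_R f(x*)`.
-/

section ShrinkingSequence

variable {a : ℕ → ℝ} {θ : ℝ}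

theorem pos_of_succ_eq_mul_or_eq (hθ : 0 < θ) (h0 : 0 < a 0)
    (hstep : ∀ ℓ, a (ℓ + 1) = θ * a ℓ ∨ a (ℓ + 1) = a ℓ) (ℓ : ℕ) : 0 < a ℓ := by
  induction ℓ with
  | zero => exact h0
  | succ ℓ ih =>
    rcases hstep ℓ with h | h <;> rw [h]
    exacts [mul_pos hθ ih, ih]

theorem antitone_of_succ_eq_mul_or_eq (hθ1 : θ ≤ 1) (hpos : ∀ ℓ, 0 ≤ a ℓ)
    (hstep : ∀ ℓ, a (ℓ + 1) = θ * a ℓ ∨ a (ℓ + 1) = a ℓ) : Antitone a := by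
  refine antitone_nat_of_succ_le fun ℓ => ?_
  rcases hstep ℓ with h | h <;> rw [h]
  exact mul_le_of_le_one_left (hpos ℓ) hθ1

theorem Antitone.apply_le_pow_mul_of_contract (ha : Antitone a) (hθ : 0 ≤ θ) {φ : ℕ → ℕ}
    (hφ : StrictMono φ) (hcontract : ∀ k, a (φ k + 1) ≤ θ * a (φ k)) (k : ℕ) :
    a (φ k) ≤ θ ^ k * a (φ 0) := by
  induction k with
  | zero => simp
  | succ k ih =>
    calc a (φ (k + 1)) ≤ a (φ k + 1) := ha (hφ k.lt_succ_self)
      _ ≤ θ * a (φ k) := hcontract k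
      _ ≤ θ * (θ ^ k * a (φ 0)) := mul_le_mul_of_nonneg_left ih hθ
      _ = θ ^ (k + 1) * a (φ 0) := by ring

theorem Antitone.tendsto_comp_zero_of_contract (ha : Antitone a) (hnonneg : ∀ ℓ, 0 ≤ a ℓ)
    (hθ : 0 ≤ θ) (hθ1 : θ < 1) {φ : ℕ → ℕ} (hφ : StrictMono φ)
    (hcontract : ∀ k, a (φ k + 1) ≤ θ * a (φ k)) :
    Tendsto (fun k => a (φ k)) atTop (𝓝 0) := by
  have hgeom : Tendsto (fun k => θ ^ k * a (φ 0)) atTop (𝓝 0) := by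
    simpa using (tendsto_pow_atTop_nhds_zero_of_lt_one hθ hθ1).mul_const (a (φ 0))
  exact squeeze_zero (fun k => hnonneg (φ k))
    (ha.apply_le_pow_mul_of_contract hθ hφ hcontract) hgeom

end ShrinkingSequence

namespace IsRSSDIteration

variable {n : ℕ} {ft : EuclideanSpace ℝ (Fin n) → ℝ → ℝ} {θμ θδ β σ abar : ℝ}
  {x : ℕ → EuclideanSpace ℝ (Fin n)} {μ δ : ℕ → ℝ}

theorem mu_succ (hiter : IsRSSDIteration ft θμ θδ β σ abar x μ δ) (ℓ : ℕ) :
    μ (ℓ + 1) = θμ * μ ℓ ∨ μ (ℓ + 1) = μ ℓ := by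
  by_cases h : ‖rssdDir ft (x ℓ) (μ ℓ)‖ ≤ δ ℓ
  · exact .inl (hiter.step_small ℓ h).1
  · exact .inr (hiter.step_big ℓ h).1

theorem delta_succ (hiter : IsRSSDIteration ft θμ θδ β σ abar x μ δ) (ℓ : ℕ) :
    δ (ℓ + 1) = θδ * δ ℓ ∨ δ (ℓ + 1) = δ ℓ := by
  by_cases h : ‖rssdDir ft (x ℓ) (μ ℓ)‖ ≤ δ ℓ
  · exact .inl (hiter.step_small ℓ h).2.1
  · exact .inr (hiter.step_big ℓ h).2.1

theorem mu_pos (hiter : IsRSSDIteration ft θμ θδ β σ abar x μ δ) (ℓ : ℕ) : 0 < μ ℓ :=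
  pos_of_succ_eq_mul_or_eq hiter.hθμ.1 hiter.hμ0 hiter.mu_succ ℓ

theorem delta_pos (hiter : IsRSSDIteration ft θμ θδ β σ abar x μ δ) (ℓ : ℕ) : 0 < δ ℓ :=
  pos_of_succ_eq_mul_or_eq hiter.hθδ.1 hiter.hδ0 hiter.delta_succ ℓ

section SmallSteps

variable (hiter : IsRSSDIteration ft θμ θδ β σ abar x μ δ) {φ : ℕ → ℕ} (hφ : StrictMono φ)
  (hφK : ∀ k, ‖rssdDir ft (x (φ k)) (μ (φ k))‖ ≤ δ (φ k))
include hiter hφ hφK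

theorem tendsto_mu_comp_zero : Tendsto (fun k => μ (φ k)) atTop (𝓝 0) := by
  have hnonneg ℓ := (hiter.mu_pos ℓ).le
  refine (antitone_of_succ_eq_mul_or_eq hiter.hθμ.2.le hnonneg hiter.mu_succ)
    |>.tendsto_comp_zero_of_contract hnonneg hiter.hθμ.1.le hiter.hθμ.2 hφ fun k => ?_
  exact ((hiter.step_small (φ k) (hφK k)).1).le

theorem tendsto_delta_comp_zero : Tendsto (fun k => δ (φ k)) atTop (𝓝 0) := by
  have hnonneg ℓ := (hiter.delta_pos ℓ).le
  refine (antitone_of_succ_eq_mul_or_eq hiter.hθδ.2.le hnonneg hiter.delta_succ)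
    |>.tendsto_comp_zero_of_contract hnonneg hiter.hθδ.1.le hiter.hθδ.2 hφ fun k => ?_
  exact ((hiter.step_small (φ k) (hφK k)).2.1).le

theorem tendsto_sphereProj_gradient_zero :
    Tendsto (fun k => sphereProj (x (φ k)) (gradient (fun y => ft y (μ (φ k))) (x (φ k))))
      atTop (𝓝 0) := by
  refine squeeze_zero_norm (fun k => ?_) (hiter.tendsto_delta_comp_zero hφ hφK)
  simpa only [rssdDir, norm_neg] using hφK k

end SmallSteps

end IsRSSDIteration

theorem rssd_accumulation_point_is_limiting_stationary_general (n : ℕ)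
    (f : EuclideanSpace ℝ (Fin n) → ℝ) (ft : EuclideanSpace ℝ (Fin n) → ℝ → ℝ)
    (hsub : ∀ (x v : EuclideanSpace ℝ (Fin n)), ‖x‖ = 1 →
      (∃ (z : ℕ → EuclideanSpace ℝ (Fin n)) (ν : ℕ → ℝ),
        (∀ k, ‖z k‖ = 1) ∧ Filter.Tendsto z Filter.atTop (nhds x) ∧ (∀ k, 0 < ν k) ∧
        Filter.Tendsto ν Filter.atTop (nhds 0) ∧
        Filter.Tendsto (fun k => sphereProj (z k) (gradient (fun y => ft y (ν k)) (z k)))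
          Filter.atTop (nhds v)) →
      IsRLimitingSubgradient f x v)
    (θμ θδ β σ abar : ℝ) (x : ℕ → EuclideanSpace ℝ (Fin n)) (μ δ : ℕ → ℝ)
    (hiter : IsRSSDIteration ft θμ θδ β σ abar x μ δ)
    (xs : EuclideanSpace ℝ (Fin n)) (φ : ℕ → ℕ) (hφ : StrictMono φ)
    (hφK : ∀ k, ‖rssdDir ft (x (φ k)) (μ (φ k))‖ ≤ δ (φ k))
    (hacc : Filter.Tendsto (fun k => x (φ k)) Filter.atTop (nhds xs)) :
    IsRLimitingSubgradient f xs 0 := by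
  have hxs : xs ∈ Metric.sphere 0 1 :=
    Metric.isClosed_sphere.mem_of_tendsto hacc
      (.of_forall fun k => mem_sphere_zero_iff_norm.2 (hiter.sphere (φ k)))
  exact hsub xs 0 (mem_sphere_zero_iff_norm.1 hxs)
    ⟨fun k => x (φ k), fun k => μ (φ k), fun k => hiter.sphere (φ k), hacc,
      fun k => hiter.mu_pos (φ k), hiter.tendsto_mu_comp_zero hφ hφK,
      hiter.tendsto_sphereProj_gradient_zero hφ hφK⟩

/-- If the smoothing function `f̃` of `f` satisfies Riemannian gradient sub-consistency
on the sphere, then any accumulation point `x*` of the subsequence `(x_ℓ)_{ℓ ∈ K}` of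
the RSSD iterates, where `K = {ℓ : ‖η_ℓ‖ ≤ δ_ℓ}`, is a Riemannian limiting stationary
point of `min_{x ∈ S^{n−1}} f(x)`: `0 ∈ ∂_R f(x*)`. -/
theorem rssd_accumulation_point_is_limiting_stationary (n : ℕ) (hn : 1 ≤ n)
    (f : EuclideanSpace ℝ (Fin n) → ℝ) (ft : EuclideanSpace ℝ (Fin n) → ℝ → ℝ)
    (κ : ℝ) (ω : ℝ → ℝ) (hsm : IsSmoothingFun f ft κ ω)
    (hsub : ∀ (x v : EuclideanSpace ℝ (Fin n)), ‖x‖ = 1 →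
      (∃ (z : ℕ → EuclideanSpace ℝ (Fin n)) (ν : ℕ → ℝ),
        (∀ k, ‖z k‖ = 1) ∧ Filter.Tendsto z Filter.atTop (nhds x) ∧ (∀ k, 0 < ν k) ∧
        Filter.Tendsto ν Filter.atTop (nhds 0) ∧
        Filter.Tendsto (fun k => sphereProj (z k) (gradient (fun y => ft y (ν k)) (z k)))
          Filter.atTop (nhds v)) →
      IsRLimitingSubgradient f x v)
    (θμ θδ β σ abar : ℝ) (x : ℕ → EuclideanSpace ℝ (Fin n)) (μ δ : ℕ → ℝ)
    (hiter : IsRSSDIteration ft θμ θδ β σ abar x μ δ)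
    (xs : EuclideanSpace ℝ (Fin n)) (φ : ℕ → ℕ) (hφ : StrictMono φ)
    (hφK : ∀ k, ‖rssdDir ft (x (φ k)) (μ (φ k))‖ ≤ δ (φ k))
    (hacc : Filter.Tendsto (fun k => x (φ k)) Filter.atTop (nhds xs)) :
    IsRLimitingSubgradient f xs 0 :=
  rssd_accumulation_point_is_limiting_stationary_general n f ft hsub θμ θδ β σ abar x μ δ hiter xs φ
    hφ hφK hacc
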